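/- arXiv:math/0501102 — 3 statements merged into one kernel-verified Lean document; each statement's English description precedes it below -/
import Mathlib

section
/- Let f : ℤ³ → ℂ be any function and define g(k_1, k_2, k_3, k_4) := ∑^{(k_1,k_2,k_3,k_4)}_{(l_1,l_2,l_3)} f(l_1, l_2, l_3). Then for all integers k_1, k_2, k_3, k_4: (T'_{2,3} g)(k_1, k_2, k_3, k_4) = −(1/2)[ ∑_{l_1=k_2+1}^{k_3} ∑_{l_2=k_2+1}^{k_3} ∑_{l_3=k_2}^{k_4} (T'_{1,2} f)(l_1, l_2, l_3) + ∑_{l_1=k_1}^{k_2+1} ∑_{l_2=k_2}^{k_3−1} ∑_{l_3=k_2}^{k_3−1} (T'_{2,3} f)(l_1, l_2, l_3) ] + (1/2)[ ∑_{l_1=k_2}^{k_3−1} ∑_{l_2=k_2}^{k_3−1} (Δ_2 (id + E_1) T'_{1,2} f)(l_1, l_2, k_2) − ∑_{l_2=k_2}^{k_3−1} ∑_{l_3=k_2}^{k_3−1} (Δ_2 (id + E_3) T'_{2,3} f)(k_2+1, l_2, l_3) ] + (1/2)[ (T'_{1,2} f)(k_2, k_2, k_2+1) − (T'_{1,2}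 f)(k_2, k_2, k_3+1) + (T'_{2,3} f)(k_2, k_2, k_2) − (T'_{2,3} f)(k_3, k_2, k_2) ] − (T'_{1,2} f)(k_2, k_3, k_2+1) − (T'_{2,3} f)(k_2, k_2, k_3), where all sums are extended sums, T'_{i,i+1} acts on the i-th and (i+1)-st arguments, and notation such as (T'_{1,2} f)(a, b, c) means the operator is applied first and the resulting function is then evaluated at (a, b, c). -/
open MvPolynomial Finset

/-- The extended sum `∑_{x=a}^{b} f(x)`: the usual sum if `a ≤ b`, zero if `b = a - 1`,
and `-(f(b+1) + ⋯ + f(a-1))` if `b + 1 ≤ a - 1`. -/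
noncomputable def extSum (f : ℤ → ℂ) (a b : ℤ) : ℂ :=
  if a ≤ b then ∑ x ∈ Finset.Icc a b, f x else -∑ x ∈ Finset.Icc (b + 1) (a - 1), f x

/-- The shift operator `E_i` on functions `ℤⁿ → ℂ`. -/
def Efun {n : ℕ} (i : Fin n) (f : (Fin n → ℤ) → ℂ) : (Fin n → ℤ) → ℂ :=
  fun x => f (Function.update x i (x i + 1))

/-- The difference operator `Δ_i = E_i - id` on functions `ℤⁿ → ℂ`. -/
noncomputable def Dfun {n : ℕ} (i : Fin n) (f : (Fin n → ℤ) → ℂ) : (Fin n → ℤ) → ℂ :=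
  fun x => Efun i f x - f x

/-- The operator `S_{i,j}` exchanging the `i`-th and `j`-th arguments. -/
def Sfun {n : ℕ} (i j : Fin n) (f : (Fin n → ℤ) → ℂ) : (Fin n → ℤ) → ℂ :=
  fun x => f (x ∘ Equiv.swap i j)

/-- The operator `T'_{i,j} = (id + S_{i,j})(id + E_j Δ_i)` on functions `ℤⁿ → ℂ`. -/
noncomputable def Tfun {n : ℕ} (i j : Fin n) (f : (Fin n → ℤ) → ℂ) : (Fin n → ℤ) → ℂ :=
  fun x => (f x + Efun j (Dfun i f) x) + Sfun i j (fun y => f y + Efun j (Dfun i f) y) x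

/-- The recursively defined summation operator `∑^{(k₁,…,k_n)}_{(l₁,…,l_{n-1})}` (here with
`n = m + 2` bottom entries and `m + 1` summation variables):
for `n = 2` it is the extended sum `∑_{l₁=k₁}^{k₂}`, and for `n > 2` it is
`∑^{(k₁,…,k_{n-1})}_{(l₁,…,l_{n-2})} ∑_{l_{n-1}=k_{n-1}+1}^{k_n} A(l₁,…,l_{n-1})
 + ∑^{(k₁,…,k_{n-1}-1)}_{(l₁,…,l_{n-2})} A(l₁,…,l_{n-2},k_{n-1})`. -/
noncomputable def sumOp : (m : ℕ) → (Fin (m + 2) → ℤ) → ((Fin (m + 1) → ℤ) → ℂ) → ℂ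
  | 0, k, A => extSum (fun l => A fun _ => l) (k 0) (k 1)
  | m + 1, k, A =>
      sumOp m (Fin.init k)
        (fun l => extSum (fun t => A (Fin.snoc l t))
          (k ⟨m + 1, by omega⟩ + 1) (k ⟨m + 2, by omega⟩)) +
      sumOp m (Function.update (Fin.init k) (Fin.last (m + 1)) (k ⟨m + 1, by omega⟩ - 1))
        (fun l => A (Fin.snoc l (k ⟨m + 1, by omega⟩)))

/-!
Every `f : ℤ³ → ℂ` is a mixed third difference `Δ₁Δ₂Δ₃ F` (sum it up along each coordinate).
The operators `E_i`, `Δ_i` and `T'_{i,i+1}` commute with `Δ₁Δ₂Δ₃`, the last one because `S_{i,i+1}`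
merely permutes its three factors. So, after replacing `f` by `Δ₁Δ₂Δ₃ F`, every extended sum on
either side telescopes in each summation variable, both sides become signed sums of finitely many
values of `F`, and the identity is a linear relation among these values.
-/

lemma extSum_succ (h : ℤ → ℂ) (a b : ℤ) : extSum h a (b + 1) = extSum h a b + h (b + 1) := by
  unfold extSum
  rcases lt_trichotomy b (a - 1) with hb | hb | hb
  · rw [if_neg (by omega), if_neg (by omega),
      show Icc (b + 1) (a - 1) = insert (b + 1) (Icc (b + 1 + 1) (a - 1)) by ext; simp; omega,
      sum_insert (by simp)]
    ring
  · subst hb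
    simp
  · rw [if_pos (by omega), if_pos (by omega),
      show Icc a (b + 1) = insert (b + 1) (Icc a b) by ext; simp; omega, sum_insert (by simp)]
    ring

lemma extSum_sub (p q : ℤ → ℂ) (a b : ℤ) :
    extSum (fun x => p x - q x) a b = extSum p a b - extSum q a b := by
  unfold extSum; split_ifs <;> simp only [sum_sub_distrib]; ring

lemma extSum_telescope (H : ℤ → ℂ) (a b : ℤ) :
    extSum (fun t => H (t + 1) - H t) a b = H (b + 1) - H a := by
  induction b using Int.inductionOn' (b := a - 1) with
  | zero => simp [extSum]
  | succ k _ ih => rw [extSum_succ, ih]; ring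
  | pred k _ ih =>
    have := extSum_succ (fun t => H (t + 1) - H t) a (k - 1)
    rw [sub_add_cancel] at this
    rw [sub_add_cancel]
    linear_combination ih - this

section Operators

variable {n : ℕ}

lemma Efun_comm (i j : Fin n) (g : (Fin n → ℤ) → ℂ) : Efun i (Efun j g) = Efun j (Efun i g) := by
  funext x
  rcases eq_or_ne i j with rfl | hij
  · rfl
  · simp only [Efun, Function.update_of_ne hij, Function.update_of_ne hij.symm,
      Function.update_comm hij]

lemma Efun_Dfun_comm (i j : Fin n) (g : (Fin n → ℤ) → ℂ) :
    Efun i (Dfun j g) = Dfun j (Efun i g) := by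
  funext x
  change Efun i (Efun j g) x - Efun i g x = Efun j (Efun i g) x - Efun i g x
  rw [Efun_comm]

lemma Dfun_comm (i j : Fin n) (g : (Fin n → ℤ) → ℂ) : Dfun i (Dfun j g) = Dfun j (Dfun i g) := by
  funext x
  change Efun i (Efun j g) x - Efun i g x - (Efun j g x - g x) =
    Efun j (Efun i g) x - Efun j g x - (Efun i g x - g x)
  rw [Efun_comm]
  ring

lemma Dfun_add (i : Fin n) (g h : (Fin n → ℤ) → ℂ) : Dfun i (g + h) = Dfun i g + Dfun i h := by
  funext x
  simp only [Dfun, Efun, Pi.add_apply]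
  ring

lemma Sfun_Dfun (i j k : Fin n) (g : (Fin n → ℤ) → ℂ) :
    Sfun i j (Dfun k g) = Dfun (Equiv.swap i j k) (Sfun i j g) := by
  funext x
  simp only [Sfun, Dfun, Efun, Function.comp_apply, Function.update_comp_equiv, Equiv.symm_swap,
    Equiv.swap_apply_self]

lemma Tfun_def (i j : Fin n) (g : (Fin n → ℤ) → ℂ) :
    Tfun i j g = g + Efun j (Dfun i g) + Sfun i j (g + Efun j (Dfun i g)) :=
  rfl

lemma Tfun_Dfun_of_ne (i j k : Fin n) (hi : k ≠ i) (hj : k ≠ j) (g : (Fin n → ℤ) → ℂ) :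
    Tfun i j (Dfun k g) = Dfun k (Tfun i j g) := by
  rw [Tfun_def, Dfun_comm i k, Efun_Dfun_comm, ← Dfun_add, Sfun_Dfun,
    Equiv.swap_apply_of_ne_of_ne hi hj, ← Dfun_add, ← Tfun_def]

lemma Tfun_Dfun_Dfun (i j : Fin n) (g : (Fin n → ℤ) → ℂ) :
    Tfun i j (Dfun i (Dfun j g)) = Dfun i (Dfun j (Tfun i j g)) := by
  rw [Tfun_def, Dfun_comm i j g, Efun_Dfun_comm, Efun_Dfun_comm, Dfun_comm j i g, ← Dfun_add,
    ← Dfun_add, Sfun_Dfun, Equiv.swap_apply_left, Sfun_Dfun, Equiv.swap_apply_right,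
    Dfun_comm j i, ← Dfun_add, ← Dfun_add, ← Tfun_def]

lemma Dfun_surjective (i : Fin n) : Function.Surjective (Dfun (n := n) i) := by
  intro g
  refine ⟨fun x => extSum (fun t => g (Function.update x i t)) 0 (x i - 1), funext fun x => ?_⟩
  have h := extSum_succ (fun t => g (Function.update x i t)) 0 (x i - 1)
  simp only [sub_add_cancel, Function.update_eq_self] at h
  simp only [Dfun, Efun, Function.update_self, Function.update_idem, add_sub_cancel_right, h]
  ring

end Operators

noncomputable def mixedDiff (Ψ : (Fin 3 → ℤ) → ℂ) : (Fin 3 → ℤ) → ℂ := Dfun 0 (Dfun 1 (Dfun 2 Ψ))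

lemma exists_mixedDiff_eq (φ : (Fin 3 → ℤ) → ℂ) :
    ∃ F : ℤ → ℤ → ℤ → ℂ, mixedDiff (fun l => F (l 0) (l 1) (l 2)) = φ := by
  obtain ⟨φ₁, rfl⟩ := Dfun_surjective 0 φ
  obtain ⟨φ₂, rfl⟩ := Dfun_surjective 1 φ₁
  obtain ⟨Ψ, rfl⟩ := Dfun_surjective 2 φ₂
  refine ⟨fun a b c => Ψ ![a, b, c], ?_⟩
  have hΨ : (fun l : Fin 3 → ℤ => Ψ ![l 0, l 1, l 2]) = Ψ := by
    funext l
    congr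
    ext i
    fin_cases i <;> rfl
  rw [hΨ]
  rfl

lemma Efun_mixedDiff (i : Fin 3) (Ψ : (Fin 3 → ℤ) → ℂ) :
    Efun i (mixedDiff Ψ) = mixedDiff (Efun i Ψ) := by
  simp only [mixedDiff, Efun_Dfun_comm]

lemma Dfun_mixedDiff (i : Fin 3) (Ψ : (Fin 3 → ℤ) → ℂ) :
    Dfun i (mixedDiff Ψ) = mixedDiff (Dfun i Ψ) := by
  rw [mixedDiff, Dfun_comm i 0, Dfun_comm i 1, Dfun_comm i 2, mixedDiff]

lemma mixedDiff_add (Φ Ψ : (Fin 3 → ℤ) → ℂ) :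
    mixedDiff (fun x => Φ x + Ψ x) = fun x => mixedDiff Φ x + mixedDiff Ψ x := by
  change mixedDiff (Φ + Ψ) = mixedDiff Φ + mixedDiff Ψ
  simp only [mixedDiff, Dfun_add]

lemma Tfun_zero_one_mixedDiff (Ψ : (Fin 3 → ℤ) → ℂ) :
    Tfun 0 1 (mixedDiff Ψ) = mixedDiff (Tfun 0 1 Ψ) := by
  rw [mixedDiff, Tfun_Dfun_Dfun, Tfun_Dfun_of_ne 0 1 2 (by decide) (by decide), mixedDiff]

lemma Tfun_one_two_mixedDiff (Ψ : (Fin 3 → ℤ) → ℂ) :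
    Tfun 1 2 (mixedDiff Ψ) = mixedDiff (Tfun 1 2 Ψ) := by
  rw [mixedDiff, Tfun_Dfun_of_ne 1 2 0 (by decide) (by decide), Tfun_Dfun_Dfun, mixedDiff]

lemma extSum_Dfun_zero (G : (Fin 3 → ℤ) → ℂ) (b c lo hi : ℤ) :
    extSum (fun t => Dfun 0 G ![t, b, c]) lo hi = G ![hi + 1, b, c] - G ![lo, b, c] := by
  have hD : ∀ t, Dfun 0 G ![t, b, c] = G ![t + 1, b, c] - G ![t, b, c] := fun t => by
    simp only [Dfun, Efun]; congr; ext i; fin_cases i <;> rfl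
  simp only [hD]
  exact extSum_telescope (fun t => G ![t, b, c]) lo hi

lemma extSum_Dfun_one (G : (Fin 3 → ℤ) → ℂ) (a c lo hi : ℤ) :
    extSum (fun t => Dfun 1 G ![a, t, c]) lo hi = G ![a, hi + 1, c] - G ![a, lo, c] := by
  have hD : ∀ t, Dfun 1 G ![a, t, c] = G ![a, t + 1, c] - G ![a, t, c] := fun t => by
    simp only [Dfun, Efun]; congr; ext i; fin_cases i <;> rfl
  simp only [hD]
  exact extSum_telescope (fun t => G ![a, t, c]) lo hi

lemma extSum_Dfun_two (G : (Fin 3 → ℤ) → ℂ) (a b lo hi : ℤ) :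
    extSum (fun t => Dfun 2 G ![a, b, t]) lo hi = G ![a, b, hi + 1] - G ![a, b, lo] := by
  have hD : ∀ t, Dfun 2 G ![a, b, t] = G ![a, b, t + 1] - G ![a, b, t] := fun t => by
    simp only [Dfun, Efun]; congr; ext i; fin_cases i <;> rfl
  simp only [hD]
  exact extSum_telescope (fun t => G ![a, b, t]) lo hi

lemma extSum_mixedDiff_box (Ψ : (Fin 3 → ℤ) → ℂ) (a₁ b₁ a₂ b₂ a₃ b₃ : ℤ) :
    extSum (fun l₁ => extSum (fun l₂ => extSum (fun l₃ => mixedDiff Ψ ![l₁, l₂, l₃])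
        a₃ b₃) a₂ b₂) a₁ b₁ =
      Ψ ![b₁ + 1, b₂ + 1, b₃ + 1] - Ψ ![a₁, b₂ + 1, b₃ + 1] - Ψ ![b₁ + 1, a₂, b₃ + 1]
        + Ψ ![a₁, a₂, b₃ + 1] - Ψ ![b₁ + 1, b₂ + 1, a₃] + Ψ ![a₁, b₂ + 1, a₃]
        + Ψ ![b₁ + 1, a₂, a₃] - Ψ ![a₁, a₂, a₃] := by
  rw [mixedDiff, Dfun_comm 1 2, Dfun_comm 0 2, Dfun_comm 0 1]
  simp only [extSum_Dfun_two, extSum_sub, extSum_Dfun_one, extSum_Dfun_zero]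
  ring

lemma extSum_mixedDiff_face₀₁ (Ψ : (Fin 3 → ℤ) → ℂ) (c a₁ b₁ a₂ b₂ : ℤ) :
    extSum (fun l₁ => extSum (fun l₂ => mixedDiff Ψ ![l₁, l₂, c]) a₂ b₂) a₁ b₁ =
      Dfun 2 Ψ ![b₁ + 1, b₂ + 1, c] - Dfun 2 Ψ ![a₁, b₂ + 1, c] - Dfun 2 Ψ ![b₁ + 1, a₂, c]
        + Dfun 2 Ψ ![a₁, a₂, c] := by
  rw [mixedDiff, Dfun_comm 0 1]
  simp only [extSum_Dfun_one, extSum_sub, extSum_Dfun_zero]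
  ring

lemma extSum_mixedDiff_face₀₂ (Ψ : (Fin 3 → ℤ) → ℂ) (b a₁ b₁ a₃ b₃ : ℤ) :
    extSum (fun l₁ => extSum (fun l₃ => mixedDiff Ψ ![l₁, b, l₃]) a₃ b₃) a₁ b₁ =
      Dfun 1 Ψ ![b₁ + 1, b, b₃ + 1] - Dfun 1 Ψ ![a₁, b, b₃ + 1] - Dfun 1 Ψ ![b₁ + 1, b, a₃]
        + Dfun 1 Ψ ![a₁, b, a₃] := by
  rw [mixedDiff, Dfun_comm 1 2, Dfun_comm 0 2]
  simp only [extSum_Dfun_two, extSum_sub, extSum_Dfun_zero]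
  ring

lemma extSum_mixedDiff_face₁₂ (Ψ : (Fin 3 → ℤ) → ℂ) (a a₂ b₂ a₃ b₃ : ℤ) :
    extSum (fun l₂ => extSum (fun l₃ => mixedDiff Ψ ![a, l₂, l₃]) a₃ b₃) a₂ b₂ =
      Dfun 0 Ψ ![a, b₂ + 1, b₃ + 1] - Dfun 0 Ψ ![a, a₂, b₃ + 1] - Dfun 0 Ψ ![a, b₂ + 1, a₃]
        + Dfun 0 Ψ ![a, a₂, a₃] := by
  rw [mixedDiff, Dfun_comm 1 2, Dfun_comm 0 2, Dfun_comm 0 1]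
  simp only [extSum_Dfun_two, extSum_sub, extSum_Dfun_one]
  ring

lemma extSum_mixedDiff_edge₀ (Ψ : (Fin 3 → ℤ) → ℂ) (b c a₁ b₁ : ℤ) :
    extSum (fun l₁ => mixedDiff Ψ ![l₁, b, c]) a₁ b₁ =
      Dfun 1 (Dfun 2 Ψ) ![b₁ + 1, b, c] - Dfun 1 (Dfun 2 Ψ) ![a₁, b, c] :=
  extSum_Dfun_zero _ b c a₁ b₁

lemma sumOp_two (k : Fin 4 → ℤ) (A : (Fin 3 → ℤ) → ℂ) :
    sumOp 2 k A =
      extSum (fun l₁ => extSum (fun l₂ => extSum (fun l₃ => A ![l₁, l₂, l₃])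
          (k 2 + 1) (k 3)) (k 1 + 1) (k 2)) (k 0) (k 1)
        + extSum (fun l₁ => extSum (fun l₃ => A ![l₁, k 1, l₃]) (k 2 + 1) (k 3)) (k 0) (k 1 - 1)
        + (extSum (fun l₁ => extSum (fun l₂ => A ![l₁, l₂, k 2]) (k 1 + 1) (k 2 - 1)) (k 0) (k 1)
        + extSum (fun l₁ => A ![l₁, k 1, k 2]) (k 0) (k 1 - 1)) := by
  have hsnoc : ∀ l₁ l₂ l₃ : ℤ,
      (Fin.snoc (Fin.snoc (fun _ : Fin 1 => l₁) l₂) l₃ : Fin 3 → ℤ) = ![l₁, l₂, l₃] := by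
    intro l₁ l₂ l₃; ext i; fin_cases i <;> rfl
  simp only [sumOp, hsnoc]
  rfl

/-- First formula of the fundamental lemma, for
`g(k₁,k₂,k₃,k₄) = ∑^{(k₁,k₂,k₃,k₄)}_{(l₁,l₂,l₃)} f(l₁,l₂,l₃)`. -/
theorem fundamental_lemma_three_rows (f : ℤ → ℤ → ℤ → ℂ) (k1 k2 k3 k4 : ℤ) :
    Tfun 1 2 (fun x : Fin 4 → ℤ =>
        sumOp 2 x (fun l : Fin 3 → ℤ => f (l 0) (l 1) (l 2))) ![k1, k2, k3, k4] =
      -(1 / 2 : ℂ) *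
        (extSum (fun l1 => extSum (fun l2 => extSum (fun l3 =>
            Tfun 0 1 (fun l : Fin 3 → ℤ => f (l 0) (l 1) (l 2)) ![l1, l2, l3])
              k2 k4) (k2 + 1) k3) (k2 + 1) k3 +
         extSum (fun l1 => extSum (fun l2 => extSum (fun l3 =>
            Tfun 1 2 (fun l : Fin 3 → ℤ => f (l 0) (l 1) (l 2)) ![l1, l2, l3])
              k2 (k3 - 1)) k2 (k3 - 1)) k1 (k2 + 1)) +
      (1 / 2 : ℂ) *
        (extSum (fun l1 => extSum (fun l2 =>
            Dfun 1 (fun y => Tfun 0 1 (fun l : Fin 3 → ℤ => f (l 0) (l 1) (l 2)) y +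
                Efun 0 (Tfun 0 1 (fun l : Fin 3 → ℤ => f (l 0) (l 1) (l 2))) y)
              ![l1, l2, k2]) k2 (k3 - 1)) k2 (k3 - 1) -
         extSum (fun l2 => extSum (fun l3 =>
            Dfun 1 (fun y => Tfun 1 2 (fun l : Fin 3 → ℤ => f (l 0) (l 1) (l 2)) y +
                Efun 2 (Tfun 1 2 (fun l : Fin 3 → ℤ => f (l 0) (l 1) (l 2))) y)
              ![k2 + 1, l2, l3]) k2 (k3 - 1)) k2 (k3 - 1)) +
      (1 / 2 : ℂ) *
        (Tfun 0 1 (fun l : Fin 3 → ℤ => f (l 0) (l 1) (l 2)) ![k2, k2, k2 + 1] -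
         Tfun 0 1 (fun l : Fin 3 → ℤ => f (l 0) (l 1) (l 2)) ![k2, k2, k3 + 1] +
         Tfun 1 2 (fun l : Fin 3 → ℤ => f (l 0) (l 1) (l 2)) ![k2, k2, k2] -
         Tfun 1 2 (fun l : Fin 3 → ℤ => f (l 0) (l 1) (l 2)) ![k3, k2, k2]) -
      Tfun 0 1 (fun l : Fin 3 → ℤ => f (l 0) (l 1) (l 2)) ![k2, k3, k2 + 1] -
      Tfun 1 2 (fun l : Fin 3 → ℤ => f (l 0) (l 1) (l 2)) ![k2, k2, k3] := by
  obtain ⟨F, hF⟩ := exists_mixedDiff_eq (fun l : Fin 3 → ℤ => f (l 0) (l 1) (l 2))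
  rw [← hF]
  simp only [Tfun_zero_one_mixedDiff, Tfun_one_two_mixedDiff, Efun_mixedDiff, ← mixedDiff_add,
    Dfun_mixedDiff, sumOp_two]
  -- simp rewrites inside-out, so the box sums go first: otherwise the face lemmas would fire
  -- on their inner double sums.
  simp only [extSum_mixedDiff_box]
  simp only [extSum_mixedDiff_face₀₁, extSum_mixedDiff_face₀₂, extSum_mixedDiff_face₁₂,
    extSum_mixedDiff_edge₀]
  simp only [mixedDiff, Tfun, Sfun, Efun, Dfun, Function.update_apply, Function.comp_apply,
    Equiv.swap_apply_def, Matrix.cons_val_zero, Matrix.cons_val_one, Matrix.cons_val_two,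
    Matrix.cons_val_three, Matrix.head_cons, Matrix.tail_cons, Fin.reduceEq, reduceIte,
    sub_add_cancel]
  ring_nf
end

section
/- Let P(X_1, …, X_n) be a polynomial over ℂ that is symmetric in X_1, …, X_n. Then P(E_{k_1}, …, E_{k_n}) applied to the polynomial ∏_{1 ≤ i < j ≤ n} (k_j − k_i)/(j − i) equals P(1, 1, …, 1) · ∏_{1 ≤ i < j ≤ n} (k_j − k_i)/(j − i). -/
open MvPolynomial Finset

/-- The shift of a polynomial by an integer vector `a`:
`(shiftPolyC a p)(x₁,…,xₙ) = p(x₁ + a₁, …, xₙ + aₙ)`. -/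
noncomputable def shiftPolyC {n : ℕ} (a : Fin n → ℤ) (p : MvPolynomial (Fin n) ℂ) :
    MvPolynomial (Fin n) ℂ :=
  aeval (fun j => X j + C ((a j : ℂ))) p

/-- A Laurent polynomial `Q` in the commuting shift operators `E₁,…,Eₙ` (an element of the
group algebra `ℂ[ℤⁿ]`, the exponent vector recording the shift) acts on polynomials. -/
noncomputable def opApplyC {n : ℕ} (Q : AddMonoidAlgebra ℂ (Fin n → ℤ))
    (p : MvPolynomial (Fin n) ℂ) : MvPolynomial (Fin n) ℂ :=
  Q.coeff.sum fun a c => c • shiftPolyC a p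

/-- The shift operator `E_{k_i}` as an element of the operator algebra. -/
noncomputable def EshC {n : ℕ} (i : Fin n) : AddMonoidAlgebra ℂ (Fin n → ℤ) :=
  AddMonoidAlgebra.single (Pi.single i 1) 1

/-- The inverse shift operator `E_{k_i}⁻¹`. -/
noncomputable def EshInvC {n : ℕ} (i : Fin n) : AddMonoidAlgebra ℂ (Fin n → ℤ) :=
  AddMonoidAlgebra.single (Pi.single i (-1)) 1

/-- The difference operator `Δ_{k_i} = E_{k_i} - id`. -/
noncomputable def DltC {n : ℕ} (i : Fin n) : AddMonoidAlgebra ℂ (Fin n → ℤ) :=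
  EshC i - 1

/-- All pairs `(p, q)` with `p < q`. -/
def pairs (n : ℕ) : Finset (Fin n × Fin n) :=
  Finset.univ.filter fun p => p.1 < p.2

/-- The polynomial `∏_{1 ≤ i < j ≤ n} (k_j - k_i) / (j - i)`. -/
noncomputable def vandC (n : ℕ) : MvPolynomial (Fin n) ℂ :=
  ∏ p ∈ pairs n, (C ((((p.2 : ℕ) : ℂ) - ((p.1 : ℕ) : ℂ))⁻¹) * (X p.2 - X p.1))

/-!
Write `Q = P(E_{k_1}, …, E_{k_n}) = ∑ₐ cₐ Eᵃ` and `V = ∏_{i<j} (k_j - k_i)/(j - i)`.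
As `∑ₐ cₐ = P(1, …, 1)`, we have `Q V - P(1, …, 1) V = ∑ₐ cₐ (Eᵃ V - V)`, and a shift `Eᵃ` does
not change the top-degree part of a polynomial, so this difference only has monomials of degree
`< n(n-1)/2`. It is also alternating: `Q` commutes with permutations of the variables because `P`
is symmetric, and `V` is alternating. An alternating polynomial has zero coefficient at every
exponent vector with two equal entries, while an exponent vector with distinct entries has degree
at least `0 + 1 + ⋯ + (n-1)`; hence the difference vanishes.
-/

theorem Finset.sum_range_card_le_sum (S : Finset ℕ) : ∑ i ∈ range #S, i ≤ ∑ x ∈ S, x := by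
  induction S using Finset.induction_on_max with
  | empty => simp
  | insert a S ha ih =>
    have hcard : #S ≤ a := by
      simpa using card_le_card fun x hx => mem_range.2 (ha x hx)
    rw [card_insert_of_notMem fun h => (ha a h).false, sum_range_succ,
      sum_insert fun h => (ha a h).false]
    omega

theorem Finsupp.choose_two_card_le_degree {σ : Type*} [Fintype σ] {s : σ →₀ ℕ}
    (hs : Function.Injective s) : (Fintype.card σ).choose 2 ≤ s.degree := by
  have hcard : #(univ.image s) = Fintype.card σ := card_image_of_injective _ hs
  have hsum : ∑ x ∈ univ.image s, x = ∑ i, s i := sum_image fun x _ y _ h => hs h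
  rw [Nat.choose_two_right, ← sum_range_id, Finsupp.degree_eq_sum, ← hcard, ← hsum]
  exact sum_range_card_le_sum _

namespace MvPolynomial

/-- Unlike `p.totalDegree < d`, membership is meaningful for `d = 0`: it forces `p = 0`. -/
noncomputable def totalDegreeLT (σ R : Type*) [CommSemiring R] (d : ℕ) :
    Submodule R (MvPolynomial σ R) :=
  restrictSupport R {s | s.degree < d}

section totalDegreeLT

variable {σ R : Type*} [CommRing R] {d : ℕ}

lemma mem_totalDegreeLT {p : MvPolynomial σ R} :
    p ∈ totalDegreeLT σ R d ↔ ∀ s ∈ p.support, s.degree < d :=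
  mem_restrictSupport_iff R

lemma totalDegreeLT_mono {d e : ℕ} (h : d ≤ e) : totalDegreeLT σ R d ≤ totalDegreeLT σ R e :=
  restrictSupport_mono R fun _ hs => lt_of_lt_of_le hs h

lemma mul_X_mem_totalDegreeLT {p : MvPolynomial σ R} (hp : p ∈ totalDegreeLT σ R d) (j : σ) :
    p * X j ∈ totalDegreeLT σ R (d + 1) := by
  rw [mem_totalDegreeLT, support_mul_X]
  simp only [mem_map, addRightEmbedding_apply, forall_exists_index, and_imp]
  rintro _ s hs rfl
  rw [map_add, Finsupp.degree_single]
  exact Nat.add_lt_add_right (mem_totalDegreeLT.1 hp s hs) 1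

lemma monomial_mem_totalDegreeLT {s : σ →₀ ℕ} (a : R) (hs : s.degree < d) :
    monomial s a ∈ totalDegreeLT σ R d :=
  (monomial_mem_restrictSupport R).2 (Or.inl hs)

lemma map_monomial_sub_mem_totalDegreeLT (φ : MvPolynomial σ R →ₐ[R] MvPolynomial σ R)
    (hφ : ∀ j, ∃ a, φ (X j) = X j + C a) (s : σ →₀ ℕ) :
    φ (monomial s 1) - monomial s 1 ∈ totalDegreeLT σ R s.degree := by
  induction hd : s.degree generalizing s with
  | zero =>
    rw [Finsupp.degree_eq_zero_iff] at hd
    simp [hd]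
  | succ d ih =>
    obtain ⟨j, hj⟩ : ∃ j, s j ≠ 0 := Finsupp.ne_iff.1 (show s ≠ 0 by rintro rfl; simp at hd)
    obtain ⟨t, rfl⟩ : ∃ t, s = t + Finsupp.single j 1 :=
      ⟨s - Finsupp.single j 1,
        (tsub_add_cancel_of_le (Finsupp.single_le_iff.2 (Nat.one_le_iff_ne_zero.2 hj))).symm⟩
    have ht : t.degree = d := by simpa using hd
    obtain ⟨a, ha⟩ := hφ j
    have hexpand : φ (monomial (t + Finsupp.single j 1) 1) - monomial (t + Finsupp.single j 1) 1 =
        (φ (monomial t 1) - monomial t 1) * X j + a • (φ (monomial t 1) - monomial t 1) +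
          a • monomial t 1 := by
      rw [monomial_add_single, pow_one, map_mul, ha, smul_sub, smul_eq_C_mul, smul_eq_C_mul]
      ring
    rw [hexpand]
    refine add_mem (add_mem (mul_X_mem_totalDegreeLT (ih t ht) j) ?_) ?_
    · exact totalDegreeLT_mono d.le_succ (Submodule.smul_mem _ _ (ih t ht))
    · exact Submodule.smul_mem _ _ (monomial_mem_totalDegreeLT _ (ht ▸ d.lt_succ_self))

lemma map_sub_mem_totalDegreeLT (φ : MvPolynomial σ R →ₐ[R] MvPolynomial σ R)
    (hφ : ∀ j, ∃ a, φ (X j) = X j + C a) {p : MvPolynomial σ R} (hp : p.totalDegree ≤ d) :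
    φ p - p ∈ totalDegreeLT σ R d := by
  rw [p.as_sum, map_sum, ← sum_sub_distrib]
  refine Submodule.sum_mem _ fun s hs => ?_
  rw [← mul_one (coeff s p), ← smul_eq_mul, ← smul_monomial, map_smul, ← smul_sub]
  exact Submodule.smul_mem _ _ (totalDegreeLT_mono ((le_totalDegree hs).trans hp)
    (map_monomial_sub_mem_totalDegreeLT φ hφ s))

end totalDegreeLT

section Alternating

variable {σ R : Type*} [CommRing R] [IsAddTorsionFree R] [DecidableEq σ]

lemma coeff_eq_zero_of_rename_swap_eq_neg {p : MvPolynomial σ R} {i j : σ}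
    (hp : rename (Equiv.swap i j) p = -p) {s : σ →₀ ℕ} (hs : s i = s j) : coeff s p = 0 := by
  have hfix : Finsupp.mapDomain (Equiv.swap i j) s = s := by
    ext k
    rw [Finsupp.mapDomain_equiv_apply, Equiv.symm_swap, Equiv.swap_apply_def]
    split_ifs with hki hkj
    · rw [hki, hs]
    · rw [hkj, hs]
    · rfl
  have h := coeff_rename_mapDomain _ (Equiv.swap i j).injective p s
  rw [hp, hfix, coeff_neg] at h
  exact neg_eq_self.1 h

lemma eq_zero_of_rename_swap_eq_neg [Fintype σ] {p : MvPolynomial σ R}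
    (hp : ∀ i j, i ≠ j → rename (Equiv.swap i j) p = -p)
    (hdeg : p ∈ totalDegreeLT σ R ((Fintype.card σ).choose 2)) : p = 0 := by
  ext s
  rw [coeff_zero]
  by_cases hs : Function.Injective s
  · by_contra h
    exact (mem_totalDegreeLT.1 hdeg s (mem_support_iff.2 h)).not_ge
      (Finsupp.choose_two_card_le_degree hs)
  · obtain ⟨i, j, hij, hne⟩ := Function.not_injective_iff.1 hs
    exact coeff_eq_zero_of_rename_swap_eq_neg (hp i j hne) hij

end Alternating

end MvPolynomial

section ShiftOperators

variable {n : ℕ}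

lemma shiftPolyC_sub_mem_totalDegreeLT (a : Fin n → ℤ) {p : MvPolynomial (Fin n) ℂ} {d : ℕ}
    (hp : p.totalDegree ≤ d) : shiftPolyC a p - p ∈ totalDegreeLT (Fin n) ℂ d :=
  map_sub_mem_totalDegreeLT (R := ℂ) (aeval fun j => X j + C (a j : ℂ))
    (fun j => ⟨a j, aeval_X _ j⟩) hp

lemma opApplyC_neg (Q : AddMonoidAlgebra ℂ (Fin n → ℤ)) (p : MvPolynomial (Fin n) ℂ) :
    opApplyC Q (-p) = -opApplyC Q p := by
  simp only [opApplyC, shiftPolyC, map_neg, smul_neg, Finsupp.sum_neg]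

lemma opApplyC_sub_smul_eq_sum (Q : AddMonoidAlgebra ℂ (Fin n → ℤ)) (p : MvPolynomial (Fin n) ℂ) :
    opApplyC Q p - (Q.coeff.sum fun _ c => c) • p =
      Q.coeff.sum fun a c => c • (shiftPolyC a p - p) := by
  simp only [opApplyC, Finsupp.sum, Finset.sum_smul, ← Finset.sum_sub_distrib, smul_sub]

lemma coeff_sum_aeval_EshC (P : MvPolynomial (Fin n) ℂ) :
    ((aeval fun i : Fin n => EshC i) P).coeff.sum (fun _ c => c) = eval (fun _ => (1 : ℂ)) P := by
  let ε := AddMonoidAlgebra.lift ℂ ℂ (Fin n → ℤ) 1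
  have hε : ∀ Q, ε Q = Q.coeff.sum fun _ c => c := fun Q => by
    simp [ε, AddMonoidAlgebra.lift_apply]
  have hE : ∀ i, ε (EshC i) = 1 := fun i => by simp [ε, EshC, AddMonoidAlgebra.lift_single]
  rw [← hε, comp_aeval_apply]
  simp only [hE]
  rfl

lemma rename_shiftPolyC (σ : Equiv.Perm (Fin n)) (a : Fin n → ℤ) (p : MvPolynomial (Fin n) ℂ) :
    rename σ (shiftPolyC a p) = shiftPolyC (a ∘ σ.symm) (rename σ p) := by
  simp only [shiftPolyC, comp_aeval_apply, aeval_rename]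
  congr
  funext j
  simp

lemma rename_opApplyC (σ : Equiv.Perm (Fin n)) (Q : AddMonoidAlgebra ℂ (Fin n → ℤ))
    (p : MvPolynomial (Fin n) ℂ) :
    rename σ (opApplyC Q p) =
      opApplyC (Q.mapDomain fun a => a ∘ σ.symm) (rename σ p) := by
  have hinj : Function.Injective fun a : Fin n → ℤ => a ∘ σ.symm :=
    fun a b h => funext fun j => by simpa using congrFun h (σ j)
  rw [opApplyC, opApplyC, AddMonoidAlgebra.mapDomain, AddMonoidAlgebra.coeff_ofCoeff,
    Finsupp.sum_mapDomain_index_inj hinj, map_finsuppSum]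
  simp only [map_smul, rename_shiftPolyC]

lemma mapDomain_aeval_EshC_of_isSymmetric {P : MvPolynomial (Fin n) ℂ} (hP : P.IsSymmetric)
    (σ : Equiv.Perm (Fin n)) :
    ((aeval fun i : Fin n => EshC i) P).mapDomain (fun a => a ∘ σ.symm) =
      aeval (fun i : Fin n => EshC i) P := by
  let f := (LinearMap.funLeft ℤ ℤ σ.symm).toAddMonoidHom
  change AddMonoidAlgebra.mapDomainAlgHom ℂ ℂ f _ = _
  rw [comp_aeval_apply]
  conv_rhs => rw [← hP σ, aeval_rename]
  congr
  funext i
  change AddMonoidAlgebra.mapDomain _ (AddMonoidAlgebra.single _ _) = EshC (σ i)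
  rw [AddMonoidAlgebra.mapDomain_single]
  exact congrArg (AddMonoidAlgebra.single · 1) (Pi.single_comp_equiv σ.symm i 1)

lemma rename_opApplyC_aeval_EshC_of_isSymmetric {P : MvPolynomial (Fin n) ℂ} (hP : P.IsSymmetric)
    (σ : Equiv.Perm (Fin n)) (p : MvPolynomial (Fin n) ℂ) :
    rename σ (opApplyC (aeval (fun i : Fin n => EshC i) P) p) =
      opApplyC (aeval (fun i : Fin n => EshC i) P) (rename σ p) := by
  rw [rename_opApplyC, mapDomain_aeval_EshC_of_isSymmetric hP]

end ShiftOperators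

section Vandermonde

variable {n : ℕ}

@[to_additive]
lemma prod_pairs {M : Type*} [CommMonoid M] (f : Fin n × Fin n → M) :
    ∏ p ∈ pairs n, f p = ∏ i, ∏ j ∈ Ioi i, f (i, j) := by
  rw [pairs, prod_filter, ← univ_product_univ, prod_product]
  refine prod_congr rfl fun i _ => ?_
  rw [← filter_lt_eq_Ioi, prod_filter]

lemma card_pairs : #(pairs n) = n.choose 2 := by
  rw [card_eq_sum_ones, sum_pairs]
  simp only [← card_eq_sum_ones, Fin.card_Ioi]
  rw [Fin.sum_univ_eq_sum_range (fun i => n - 1 - i), Nat.choose_two_right, ← sum_range_id]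
  exact sum_range_reflect (fun i => i) n

lemma totalDegree_vandC_le : (vandC n).totalDegree ≤ n.choose 2 := by
  refine (totalDegree_finsetProd _ _).trans ?_
  rw [← card_pairs, card_eq_sum_ones]
  refine sum_le_sum fun p _ => (totalDegree_mul _ _).trans ?_
  rw [totalDegree_C, zero_add]
  exact (totalDegree_sub _ _).trans (max_le (totalDegree_X _).le (totalDegree_X _).le)

lemma eval_vandC (x : Fin n → ℂ) :
    eval x (vandC n) =
      (∏ p ∈ pairs n, (((p.2 : ℕ) : ℂ) - ((p.1 : ℕ) : ℂ))⁻¹) * (Matrix.vandermonde x).det := by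
  simp only [vandC, map_prod, map_mul, eval_C, map_sub, eval_X, prod_mul_distrib,
    Matrix.det_vandermonde, prod_pairs fun p => x p.2 - x p.1]

lemma rename_swap_vandC {i j : Fin n} (hij : i ≠ j) :
    rename (Equiv.swap i j) (vandC n) = -vandC n := by
  refine MvPolynomial.funext fun x => ?_
  have hperm : Matrix.vandermonde (x ∘ Equiv.swap i j) =
      (Matrix.vandermonde x).submatrix (Equiv.swap i j) id := rfl
  rw [eval_rename, map_neg, eval_vandC, eval_vandC, hperm, Matrix.det_permute,
    Equiv.Perm.sign_swap hij]
  simp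

end Vandermonde

/-- For symmetric `P`, `P(E_{k_1},…,E_{k_n})` acts on `∏_{i<j} (k_j - k_i)/(j - i)` as the
scalar `P(1,…,1)`. -/
theorem symmetric_operator_on_vandermonde (n : ℕ) (P : MvPolynomial (Fin n) ℂ)
    (hP : P.IsSymmetric) :
    opApplyC (aeval (fun i : Fin n => EshC i) P) (vandC n) =
      C (eval (fun _ : Fin n => (1 : ℂ)) P) * vandC n := by
  rw [← sub_eq_zero, ← smul_eq_C_mul, ← coeff_sum_aeval_EshC]
  apply eq_zero_of_rename_swap_eq_neg
  · intro i j hij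
    rw [map_sub, map_smul, rename_opApplyC_aeval_EshC_of_isSymmetric hP, rename_swap_vandC hij,
      opApplyC_neg, smul_neg, neg_sub_neg, neg_sub]
  · rw [Fintype.card_fin, opApplyC_sub_smul_eq_sum]
    exact Submodule.finsuppSum_mem _ _ _ _ fun a _ =>
      Submodule.smul_mem _ _ (shiftPolyC_sub_mem_totalDegreeLT a totalDegree_vandC_le)
end

section
/- For every n ≥ 1 and all integers k_1 < k_2 < … < k_n, the number of monotone triangles (a_{i,j})_{1 ≤ j ≤ i ≤ n} with bottom row (k_1, …, k_n) that are in addition strictly increasing in southeast direction (i.e., a_{i−1,j} < a_{i,j+1} for all 1 ≤ j < i ≤ n) equals ∏_{1 ≤ i < j ≤ n} (k_j − k_i)/(j − i). -/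
open MvPolynomial Finset

/-- A monotone triangle with `n` rows, stored with 0-indexed rows: row `r` (for `r < n`)
has `r + 1` entries.  The monotone-triangle conditions correspond to
`a_{i,j} ≤ a_{i-1,j} ≤ a_{i,j+1}` and `a_{i,j} < a_{i,j+1}` for `1 ≤ j < i ≤ n` (1-indexed). -/
def IsMonotoneTriangle {n : ℕ} (a : (i : Fin n) → Fin (i.1 + 1) → ℤ) : Prop :=
  ∀ (r c : ℕ) (hr : r < n) (h1 : 1 ≤ r) (hc : c < r),
    a ⟨r, hr⟩ ⟨c, by show c < r + 1; omega⟩ ≤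
      a ⟨r - 1, by omega⟩ ⟨c, by show c < r - 1 + 1; omega⟩ ∧
    a ⟨r - 1, by omega⟩ ⟨c, by show c < r - 1 + 1; omega⟩ ≤
      a ⟨r, hr⟩ ⟨c + 1, by show c + 1 < r + 1; omega⟩ ∧
    a ⟨r, hr⟩ ⟨c, by show c < r + 1; omega⟩ < a ⟨r, hr⟩ ⟨c + 1, by show c + 1 < r + 1; omega⟩

/-- The bottom row (row `n-1`, which has `n` entries) is `k`. -/
def HasBottomRow {n : ℕ} (a : (i : Fin n) → Fin (i.1 + 1) → ℤ) (k : Fin n → ℤ) : Prop :=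
  ∀ j : Fin n, a ⟨n - 1, by have := j.isLt; omega⟩
    ⟨j.1, by show j.1 < n - 1 + 1; have := j.isLt; omega⟩ = k j

/-- The number of monotone triangles with `n` rows and bottom row `k`. -/
noncomputable def mtCount (n : ℕ) (k : Fin n → ℤ) : ℕ :=
  Nat.card {a : (i : Fin n) → Fin (i.1 + 1) → ℤ // IsMonotoneTriangle a ∧ HasBottomRow a k}

/-- Strict increase in southeast direction: `a_{i-1,j} < a_{i,j+1}` for `1 ≤ j < i ≤ n`. -/
def IsSEStrict {n : ℕ} (a : (i : Fin n) → Fin (i.1 + 1) → ℤ) : Prop :=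
  ∀ (r c : ℕ) (hr : r < n) (h1 : 1 ≤ r) (hc : c < r),
    a ⟨r - 1, by omega⟩ ⟨c, by show c < r - 1 + 1; omega⟩ <
      a ⟨r, hr⟩ ⟨c + 1, by show c + 1 < r + 1; omega⟩

/-!
Removing the bottom row `k` of a strict triangle leaves a strict triangle whose bottom row `ν`
interlaces strictly, `k i ≤ ν i < k (i + 1)`, so the count `c` satisfies `c k = ∑ ν, c ν`.
Up to the factor `n !`, the Vandermonde determinant `V` satisfies the same recursion: with falling
factorials as columns, `V ν = det ((ν i)_j)`, so by multilinearity in the rows `∑ ν, V ν` is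
the determinant of the row sums
`∑_{k i ≤ y < k (i+1)} (y)_j = ((k (i+1))_{j+1} - (k i)_{j+1}) / (j+1)`, and subtracting
consecutive rows of the matrix `((k i)_j)` shows that this is `V k / n !`.
Hence `c k = V k / V (0, 1, …, n - 1)`.
-/

open Nat Matrix

theorem Int.sum_Ico_sub {M : Type*} [AddCommGroup M] (f : ℤ → M) {a b : ℤ} (hab : a ≤ b) :
    ∑ y ∈ Ico a b, (f (y + 1) - f y) = f b - f a := by
  induction b, hab using Int.leInduction with
  | base => simp
  | succ b hab ih => rw [← sum_Ico_add_eq_sum_Ico_add_one hab, ih]; abel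

section

variable {R : Type*} [CommRing R]

theorem descPochhammer_eval_add_one_sub (j : ℕ) (y : R) :
    (descPochhammer R (j + 1)).eval (y + 1) - (descPochhammer R (j + 1)).eval y =
      (j + 1) * (descPochhammer R j).eval y := by
  rw [descPochhammer_succ_eval j y, descPochhammer_succ_left, Polynomial.eval_mul,
    Polynomial.eval_comp]
  simp only [Polynomial.eval_X, Polynomial.eval_sub, Polynomial.eval_one, add_sub_cancel_right]
  ring

theorem Matrix.det_eq_det_succ_sub_castSucc_of_col_zero_eq_one {n : ℕ}
    (M : Matrix (Fin (n + 1)) (Fin (n + 1)) R) (hM : ∀ i, M i 0 = 1) :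
    M.det = (of fun i j : Fin n => M i.succ j.succ - M i.castSucc j.succ).det := by
  set D : Matrix (Fin (n + 1)) (Fin (n + 1)) R :=
    of fun i => Fin.cases (M 0) (fun i => M i.succ - M i.castSucc) i
  have hMD : M.det = D.det :=
    det_eq_of_forall_row_eq_smul_add_pred (fun _ => 1) (fun _ => rfl) (fun i j => by simp [D])
  have hD0 : ∀ i : Fin n, D i.succ 0 = 0 := fun i => by simp [D, hM]
  rw [hMD, det_succ_column_zero, Fin.sum_univ_succ, sum_eq_zero fun i _ => by simp [hD0]]
  simp only [D, hM, of_apply, Fin.cases_zero, Fin.val_zero, pow_zero, one_mul, add_zero]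
  rfl

theorem Matrix.sum_piFinset_det_eq_det_sum {n : ℕ} {ι : Type*} (A : Fin n → Finset ι)
    (g : ι → Fin n → R) :
    ∑ ν ∈ Fintype.piFinset A, (of fun i j => g (ν i) j).det =
      (of fun i j => ∑ y ∈ A i, g y j).det := by
  have := (detRowAlternating (R := R) (n := Fin n)).toMultilinearMap.map_sum_finset
    (fun _ y => g y) A
  simp only [Finset.sum_fn] at this
  exact this.symm

theorem Matrix.det_vandermonde_eq_det_eval_descPochhammer [IsDomain R] {n : ℕ} (x : Fin n → R) :
    (vandermonde x).det = (of fun i j : Fin n => (descPochhammer R j).eval (x i)).det :=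
  det_eval_matrixOfPolynomials_eq_det_vandermonde x _ (fun j => descPochhammer_natDegree R j)
    (fun j => monic_descPochhammer R j)

theorem factorial_mul_sum_det_vandermonde [IsDomain R] {n : ℕ} (x : Fin (n + 1) → ℤ)
    (hx : Monotone x) :
    (n ! : R) * ∑ ν ∈ Fintype.piFinset (fun i : Fin n => Ico (x i.castSucc) (x i.succ)),
        (vandermonde fun i => (ν i : R)).det =
      (vandermonde fun i => (x i : R)).det := by
  set D : ℕ → ℤ → R := fun j y => (descPochhammer R j).eval (y : R)
  have hfac : (n ! : R) = ∏ j : Fin n, ((j : R) + 1) := by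
    rw [← Finset.prod_range_add_one_eq_factorial, ← Fin.prod_univ_eq_prod_range]
    push_cast; rfl
  have htelescope (i : Fin n) (j : Fin n) :
      ((j : R) + 1) * ∑ y ∈ Ico (x i.castSucc) (x i.succ), D j y =
        D (j + 1) (x i.succ) - D (j + 1) (x i.castSucc) := by
    rw [Finset.mul_sum, ← Int.sum_Ico_sub (D (j + 1)) (hx (Fin.castSucc_le_succ i))]
    refine Finset.sum_congr rfl fun y _ => ?_
    simp only [D, Int.cast_add, Int.cast_one, descPochhammer_eval_add_one_sub]
  calc (n ! : R) * ∑ ν ∈ Fintype.piFinset (fun i : Fin n => Ico (x i.castSucc) (x i.succ)),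
        (vandermonde fun i => (ν i : R)).det
      = (n ! : R) * (of fun i j : Fin n => ∑ y ∈ Ico (x i.castSucc) (x i.succ), D j y).det := by
        simp only [det_vandermonde_eq_det_eval_descPochhammer]
        rw [← Matrix.sum_piFinset_det_eq_det_sum]
    _ = (of fun i j : Fin n => D (j + 1) (x i.succ) - D (j + 1) (x i.castSucc)).det := by
        rw [hfac, ← det_mul_row]
        congr
        ext i j
        exact htelescope i j
    _ = (vandermonde fun i => (x i : R)).det := by
        rw [det_vandermonde_eq_det_eval_descPochhammer,
          det_eq_det_succ_sub_castSucc_of_col_zero_eq_one]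
        · rfl
        · simp

end

abbrev Triangle (n : ℕ) := (i : Fin n) → Fin (i.1 + 1) → ℤ

abbrev StrictTriangles (n : ℕ) (k : Fin n → ℤ) :=
  {a : Triangle n // IsMonotoneTriangle a ∧ IsSEStrict a ∧ HasBottomRow a k}

noncomputable def strictlyInterlacing {n : ℕ} (k : Fin (n + 1) → ℤ) :
    Finset (Fin n → ℤ) :=
  Fintype.piFinset fun i => Ico (k i.castSucc) (k i.succ)

namespace Triangle

variable {n : ℕ}

def lastRow (b : Triangle n) : Fin n → ℤ := fun j =>
  b ⟨n - 1, by have := j.isLt; omega⟩ ⟨j.1, by have := j.isLt; show j.1 < n - 1 + 1; omega⟩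

def init (a : Triangle (n + 1)) : Triangle n := fun i j => a ⟨i, by omega⟩ j

def snoc (b : Triangle n) (k : Fin (n + 1) → ℤ) : Triangle (n + 1) := fun i j =>
  if h : i.1 < n then b ⟨i, h⟩ j else k ⟨j, by omega⟩

theorem hasBottomRow_iff {b : Triangle n} {ν : Fin n → ℤ} :
    HasBottomRow b ν ↔ b.lastRow = ν :=
  funext_iff.symm

theorem init_snoc (b : Triangle n) (k : Fin (n + 1) → ℤ) : (b.snoc k).init = b := by
  funext i j
  exact dif_pos i.2

theorem snoc_init {a : Triangle (n + 1)} {k : Fin (n + 1) → ℤ} (ha : HasBottomRow a k) :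
    a.init.snoc k = a := by
  funext ⟨i, hi⟩ j
  by_cases hin : i < n
  · exact dif_pos hin
  · obtain rfl : i = n := by omega
    exact (dif_neg hin).trans (ha ⟨j, j.2⟩).symm

theorem hasBottomRow_snoc (b : Triangle n) (k : Fin (n + 1) → ℤ) : HasBottomRow (b.snoc k) k :=
  fun _ => dif_neg (Nat.lt_irrefl n)

theorem isMonotoneTriangle_snoc_iff {b : Triangle n} {k : Fin (n + 1) → ℤ} :
    IsMonotoneTriangle (b.snoc k) ↔ IsMonotoneTriangle b ∧
      ∀ c : Fin n,
        k c.castSucc ≤ b.lastRow c ∧ b.lastRow c ≤ k c.succ ∧ k c.castSucc < k c.succ := by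
  constructor
  · intro h
    refine ⟨fun r c hr h1 hc => ?_, fun ⟨c, hc⟩ => ?_⟩
    · have := h r c (by omega) h1 hc
      simpa only [snoc, dif_pos hr, dif_pos (by omega : r - 1 < n)] using this
    · have := h n c (by omega) (by omega) hc
      simpa only [snoc, lastRow, Fin.castSucc_mk, Fin.succ_mk, lt_irrefl, dif_neg,
        not_false_eq_true, dif_pos (by omega : n - 1 < n)] using this
  · rintro ⟨hb, hlast⟩ r c hr h1 hc
    by_cases hrn : r < n
    · simpa only [snoc, dif_pos hrn, dif_pos (by omega : r - 1 < n)] using hb r c hrn h1 hc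
    · obtain rfl : r = n := by omega
      simpa only [snoc, lastRow, Fin.castSucc_mk, Fin.succ_mk, lt_irrefl, dif_neg,
        not_false_eq_true, dif_pos (by omega : r - 1 < r)] using hlast ⟨c, hc⟩

theorem isSEStrict_snoc_iff {b : Triangle n} {k : Fin (n + 1) → ℤ} :
    IsSEStrict (b.snoc k) ↔ IsSEStrict b ∧ ∀ c : Fin n, b.lastRow c < k c.succ := by
  constructor
  · intro h
    refine ⟨fun r c hr h1 hc => ?_, fun ⟨c, hc⟩ => ?_⟩
    · have := h r c (by omega) h1 hc
      simpa only [snoc, dif_pos hr, dif_pos (by omega : r - 1 < n)] using this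
    · have := h n c (by omega) (by omega) hc
      simpa only [snoc, lastRow, Fin.succ_mk, lt_irrefl, dif_neg, not_false_eq_true,
        dif_pos (by omega : n - 1 < n)] using this
  · rintro ⟨hb, hlast⟩ r c hr h1 hc
    by_cases hrn : r < n
    · simpa only [snoc, dif_pos hrn, dif_pos (by omega : r - 1 < n)] using hb r c hrn h1 hc
    · obtain rfl : r = n := by omega
      simpa only [snoc, lastRow, Fin.succ_mk, lt_irrefl, dif_neg, not_false_eq_true,
        dif_pos (by omega : r - 1 < r)] using hlast ⟨c, hc⟩

theorem isMonotoneTriangle_and_isSEStrict_snoc_iff {b : Triangle n} {k : Fin (n + 1) → ℤ} :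
    IsMonotoneTriangle (b.snoc k) ∧ IsSEStrict (b.snoc k) ↔
      IsMonotoneTriangle b ∧ IsSEStrict b ∧ b.lastRow ∈ strictlyInterlacing k := by
  simp only [isMonotoneTriangle_snoc_iff, isSEStrict_snoc_iff, strictlyInterlacing,
    Fintype.mem_piFinset, mem_Ico]
  constructor
  · rintro ⟨⟨hmono, hrow⟩, hse, hlast⟩
    exact ⟨hmono, hse, fun c => ⟨(hrow c).1, hlast c⟩⟩
  · rintro ⟨hmono, hse, hrow⟩
    exact ⟨⟨hmono, fun c => ⟨(hrow c).1, (hrow c).2.le, (hrow c).1.trans_lt (hrow c).2⟩⟩,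
      hse, fun c => (hrow c).2⟩

end Triangle

open Triangle in
def strictTrianglesSuccEquiv {n : ℕ} (k : Fin (n + 1) → ℤ) :
    StrictTriangles (n + 1) k ≃ Σ ν : strictlyInterlacing k, StrictTriangles n ν where
  toFun a :=
    have hstrict := isMonotoneTriangle_and_isSEStrict_snoc_iff.mp
      (by rw [snoc_init a.2.2.2]; exact ⟨a.2.1, a.2.2.1⟩)
    ⟨⟨a.1.init.lastRow, hstrict.2.2⟩, a.1.init, hstrict.1, hstrict.2.1, fun _ => rfl⟩
  invFun p :=
    have hstrict := isMonotoneTriangle_and_isSEStrict_snoc_iff.mpr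
      ⟨p.2.2.1, p.2.2.2.1, by rw [hasBottomRow_iff.mp p.2.2.2.2]; exact p.1.2⟩
    ⟨p.2.1.snoc k, hstrict.1, hstrict.2, hasBottomRow_snoc _ _⟩
  left_inv a := Subtype.ext (snoc_init a.2.2.2)
  right_inv := by
    rintro ⟨⟨ν, _⟩, b, hb⟩
    obtain rfl := hasBottomRow_iff.mp hb.2.2
    exact Sigma.subtype_ext (Subtype.ext (by simp only [init_snoc])) (init_snoc b k)

instance finite_strictTriangles : ∀ (n : ℕ) (k : Fin n → ℤ), Finite (StrictTriangles n k)
  | 0, _ => Finite.of_subsingleton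
  | n + 1, k =>
    have := fun ν : Fin n → ℤ => finite_strictTriangles n ν
    Finite.of_equiv _ (strictTrianglesSuccEquiv k).symm

theorem card_strictTriangles_succ {n : ℕ} (k : Fin (n + 1) → ℤ) :
    Nat.card (StrictTriangles (n + 1) k) =
      ∑ ν ∈ strictlyInterlacing k, Nat.card (StrictTriangles n ν) := by
  rw [Nat.card_congr (strictTrianglesSuccEquiv k), Nat.card_sigma,
    Finset.sum_coe_sort (strictlyInterlacing k) fun ν => Nat.card (StrictTriangles n ν)]

theorem monotone_of_mem_strictlyInterlacing {n : ℕ} {k : Fin (n + 1) → ℤ} (hk : Monotone k)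
    {ν : Fin n → ℤ} (hν : ν ∈ strictlyInterlacing k) : Monotone ν := by
  simp only [strictlyInterlacing, Fintype.mem_piFinset, mem_Ico] at hν
  intro i j hij
  rcases hij.eq_or_lt with rfl | hlt
  · rfl
  · calc ν i ≤ k i.succ := (hν i).2.le
      _ ≤ k j.castSucc := hk (Fin.succ_le_castSucc_iff.mpr hlt)
      _ ≤ ν j := (hν j).1

theorem det_vandermonde_id_succ (n : ℕ) :
    (vandermonde fun i : Fin (n + 1) => (i : ℚ)).det =
      n ! * (vandermonde fun i : Fin n => (i : ℚ)).det := by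
  have hsingle : (Fintype.piFinset fun i : Fin n => Ico ((i.castSucc : ℕ) : ℤ) (i.succ : ℕ)) =
      {fun i : Fin n => ((i : ℕ) : ℤ)} := by
    rw [← Fintype.piFinset_singleton]
    congr
    funext i
    simp only [Fin.val_castSucc, Fin.val_succ, Nat.cast_add, Nat.cast_one,
      Ico_add_one_right_eq_Icc, Icc_self]
  have := factorial_mul_sum_det_vandermonde (R := ℚ) (fun i : Fin (n + 1) => ((i : ℕ) : ℤ))
    fun i j h => Int.ofNat_le.mpr h
  rw [hsingle, sum_singleton] at this
  simpa only [Int.cast_natCast] using this.symm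

theorem card_strictTriangles_mul_det_vandermonde_id :
    ∀ {n : ℕ} {k : Fin n → ℤ}, Monotone k →
      (Nat.card (StrictTriangles n k) : ℚ) * (vandermonde fun i : Fin n => (i : ℚ)).det =
        (vandermonde fun i => (k i : ℚ)).det
  | 0, k, _ => by
    have : Unique (StrictTriangles 0 k) :=
      { default := ⟨fun i => i.elim0, fun _ _ hr => absurd hr (Nat.not_lt_zero _),
          fun _ _ hr => absurd hr (Nat.not_lt_zero _), fun j => j.elim0⟩
        uniq := fun _ => Subsingleton.elim _ _ }
    simp only [Nat.card_unique, Nat.cast_one, det_isEmpty, one_mul]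
  | n + 1, k, hk => by
    rw [card_strictTriangles_succ, det_vandermonde_id_succ,
      ← factorial_mul_sum_det_vandermonde k hk, Nat.cast_sum, Finset.sum_mul, Finset.mul_sum]
    refine Finset.sum_congr rfl fun ν hν => ?_
    rw [← card_strictTriangles_mul_det_vandermonde_id
      (monotone_of_mem_strictlyInterlacing hk hν)]
    ring

theorem prod_pairs_eq_prod_Ioi {M : Type*} [CommMonoid M] {n : ℕ} (f : Fin n → Fin n → M) :
    ∏ p ∈ pairs n, f p.1 p.2 = ∏ i, ∏ j ∈ Ioi i, f i j := by
  rw [pairs, prod_filter, ← univ_product_univ, prod_product]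
  refine prod_congr rfl fun i _ => ?_
  rw [← filter_lt_eq_Ioi, prod_filter]

theorem strict_monotone_triangle_count_general (n : ℕ) (k : Fin n → ℤ)
    (hk : StrictMono k) :
    ((Nat.card {a : (i : Fin n) → Fin (i.1 + 1) → ℤ //
        IsMonotoneTriangle a ∧ IsSEStrict a ∧ HasBottomRow a k} : ℕ) : ℚ) =
      ∏ p ∈ pairs n, (((k p.2 : ℚ) - (k p.1 : ℚ)) / (((p.2 : ℕ) : ℚ) - ((p.1 : ℕ) : ℚ))) := by
  have hid : (vandermonde fun i : Fin n => (i : ℚ)).det ≠ 0 :=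
    det_vandermonde_ne_zero_iff.mpr fun i j h => Fin.ext (by exact_mod_cast h)
  rw [prod_pairs_eq_prod_Ioi (fun i j => ((k j : ℚ) - k i) / ((j : ℕ) - (i : ℕ)))]
  simp only [prod_div_distrib]
  rw [← det_vandermonde, ← det_vandermonde, eq_div_iff hid]
  exact card_strictTriangles_mul_det_vandermonde_id hk.monotone

/-- The number of monotone triangles with bottom row `k₁ < … < k_n` which are strictly
increasing in southeast direction is `∏_{1 ≤ i < j ≤ n} (k_j - k_i)/(j - i)`. -/
theorem strict_monotone_triangle_count (n : ℕ) (hn : 1 ≤ n) (k : Fin n → ℤ)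
    (hk : StrictMono k) :
    ((Nat.card {a : (i : Fin n) → Fin (i.1 + 1) → ℤ //
        IsMonotoneTriangle a ∧ IsSEStrict a ∧ HasBottomRow a k} : ℕ) : ℚ) =
      ∏ p ∈ pairs n, (((k p.2 : ℚ) - (k p.1 : ℚ)) / (((p.2 : ℕ) : ℚ) - ((p.1 : ℕ) : ℚ))) :=
  strict_monotone_triangle_count_general n k hk
end
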